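/- arXiv:1803.09485 — 5 statements merged into one kernel-verified Lean document; each statement's English description precedes it below -/
import Mathlib

section
/- If A ⊆ ω is quasiminimal, then the degree of enumerability of A is strictly above the least Medvedev degree (i.e., E_A has no recursive member while E_A ≤_s any problem reduces appropriately), and moreover {f} ≰_s E_A for every nonrecursive total f : ω → ω. -/
/-!  Common definitions: mass problems in Baire space, Medvedev reducibility,
enumeration reducibility, trees, and related notions. -/

/-- A Turing functional, given by a monotone partial recursive map taking a
finite initial segment of the oracle and an input to an output value. -/
structure TuringFunctional where
  app : List ℕ × ℕ →. ℕ
  partrec : Partrec app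
  mono : ∀ {σ τ : List ℕ} {n y : ℕ}, σ <+: τ → y ∈ app (σ, n) → y ∈ app (τ, n)

/-- `Φ.Total g f` means that `Φ(g)` is total and equals `f`. -/
def TuringFunctional.Total (Φ : TuringFunctional) (g f : ℕ → ℕ) : Prop :=
  ∀ n, ∃ k, f n ∈ Φ.app ((List.range k).map g, n)

/-- Medvedev reducibility `A ≤ₛ B` between mass problems. -/
def MedvedevLE (A B : Set (ℕ → ℕ)) : Prop :=
  ∃ Φ : TuringFunctional, ∀ g ∈ B, ∃ f, Φ.Total g f ∧ f ∈ A

/-- Medvedev equivalence. -/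
def MedvedevEquiv (A B : Set (ℕ → ℕ)) : Prop := MedvedevLE A B ∧ MedvedevLE B A

/-- The problem of enumerability of `A`: all functions with range `A`. -/
def EProb (A : Set ℕ) : Set (ℕ → ℕ) := {f | Set.range f = A}

/-- The graph of `f`, coded as a set of naturals via the pairing function. -/
def graphSet (f : ℕ → ℕ) : Set ℕ := Set.range fun n => Nat.pair n (f n)

/-- The `e`-th enumeration operator applied to a set `B`:
`x` is enumerated iff for some (code `u` of a) finite list contained in `B`,
the `e`-th partial recursive function halts on `⟨x, u⟩`. -/
def enumOpApply (e : ℕ) (B : Set ℕ) : Set ℕ :=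
  {x | ∃ u : ℕ, ((Denumerable.ofNat Nat.Partrec.Code e).eval (Nat.pair x u)).Dom ∧
        ∀ y ∈ Denumerable.ofNat (List ℕ) u, y ∈ B}

/-- Enumeration reducibility between subsets of `ℕ`. -/
def EnumLE (A B : Set ℕ) : Prop := ∃ e : ℕ, enumOpApply e B = A

/-- Enumeration equivalence. -/
def EnumEquiv (A B : Set ℕ) : Prop := EnumLE A B ∧ EnumLE B A

/-- `A` is recursively enumerable: it is the domain of a partial recursive function. -/
def REset (A : Set ℕ) : Prop := ∃ c : Nat.Partrec.Code, A = {x | (c.eval x).Dom}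

/-- `A` is quasiminimal: not r.e., and every total function whose graph
enumeration-reduces to `A` is recursive. -/
def Quasiminimal (A : Set ℕ) : Prop :=
  ¬ REset A ∧ ∀ f : ℕ → ℕ, EnumLE (graphSet f) A → Computable f

/-- `A` (as a set) has cototal enumeration degree. -/
def CototalDeg (A : Set ℕ) : Prop := ∃ B : Set ℕ, EnumEquiv B A ∧ EnumLE B Bᶜ

/-- The set `K_A = {⟨e,x⟩ : x ∈ Ψ_e(A)}`. -/
def Kset (A : Set ℕ) : Set ℕ := {p | p.unpair.2 ∈ enumOpApply p.unpair.1 A}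

/-- The skip of `A`. -/
def skipSet (A : Set ℕ) : Set ℕ := (Kset A)ᶜ

/-- The recursive join of two subsets of `ℕ`. -/
def joinSet (A B : Set ℕ) : Set ℕ :=
  {n | (n % 2 = 0 ∧ n / 2 ∈ A) ∨ (n % 2 = 1 ∧ n / 2 ∈ B)}

/-- `A` is recursively enumerable in (the characteristic function of) `X`,
i.e. `A ≤ₑ X ⊕ Xᶜ`. -/
def REin (A X : Set ℕ) : Prop := EnumLE A (joinSet X Xᶜ)

/-- Trees: subsets of `ω^{<ω}` closed under initial segments. -/
def IsTree (T : Set (List ℕ)) : Prop := ∀ ⦃σ τ : List ℕ⦄, σ <+: τ → τ ∈ T → σ ∈ T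

/-- A leaf of `T`: a node with no proper extension in `T`. -/
def IsLeaf (T : Set (List ℕ)) (σ : List ℕ) : Prop :=
  σ ∈ T ∧ ∀ τ ∈ T, σ <+: τ → τ = σ

/-- `T` has no leaves. -/
def NoLeaves (T : Set (List ℕ)) : Prop := ∀ σ ∈ T, ¬ IsLeaf T σ

/-- `T` is finitely branching. -/
def FinBranching (T : Set (List ℕ)) : Prop := ∀ σ ∈ T, {n : ℕ | σ ++ [n] ∈ T}.Finite

/-- `[T]`: the set of infinite paths through `T`. -/
def Paths (T : Set (List ℕ)) : Set (ℕ → ℕ) := {f | ∀ n, (List.range n).map f ∈ T}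

/-- A tree coded as a subset of `ℕ`. -/
def codeTree (T : Set (List ℕ)) : Set ℕ := Encodable.encode '' T

/-- `T` is `h`-bounded. -/
def BoundedTree (h : ℕ → ℕ) (T : Set (List ℕ)) : Prop :=
  ∀ σ ∈ T, ∀ i : ℕ, ∀ hi : i < σ.length, σ.get ⟨i, hi⟩ < h i

/-- A uniformly e-pointed tree with respect to functions. -/
def UEPfun (T : Set (List ℕ)) : Prop :=
  IsTree T ∧ FinBranching T ∧ NoLeaves T ∧
    ∃ e : ℕ, ∀ g ∈ Paths T, enumOpApply e (graphSet g) = codeTree T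

/-- A uniformly e-pointed tree with respect to sets (a subtree of `2^{<ω}`). -/
def UEPset (T : Set (List ℕ)) : Prop :=
  IsTree T ∧ (∀ σ ∈ T, ∀ i ∈ σ, i ≤ 1) ∧ NoLeaves T ∧
    ∃ e : ℕ, ∀ g ∈ Paths T, enumOpApply e {n | g n = 1} = codeTree T

/-- Prepend `i` to a function. -/
def consFun (i : ℕ) (f : ℕ → ℕ) : ℕ → ℕ := fun n => Nat.casesOn n i fun m => f m

/-- The mass problem `0⌢A ∪ 1⌢B`, representing the meet of the degrees of `A` and `B`. -/
def meetProb (A B : Set (ℕ → ℕ)) : Set (ℕ → ℕ) := consFun 0 '' A ∪ consFun 1 '' B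

/-- A mass problem has meet-irreducible Medvedev degree: its degree is not the
meet of two strictly larger degrees. -/
def MeetIrred (X : Set (ℕ → ℕ)) : Prop :=
  ¬ ∃ B C : Set (ℕ → ℕ), MedvedevEquiv (meetProb B C) X ∧
      (MedvedevLE X B ∧ ¬ MedvedevLE B X) ∧ (MedvedevLE X C ∧ ¬ MedvedevLE C X)

/-- `σ` is an initial segment of `f`. -/
def strPrefix (σ : List ℕ) (f : ℕ → ℕ) : Prop := (List.range σ.length).map f = σ

/-- A uniform mass problem. -/
def UniformProb (A : Set (ℕ → ℕ)) : Prop :=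
  ∀ σ : List ℕ, (∃ f ∈ A, strPrefix σ f) → MedvedevLE {f | f ∈ A ∧ strPrefix σ f} A

/-- The `{0,1}`-valued diagonally nonrecursive functions. -/
def DNR2 : Set (ℕ → ℕ) :=
  {f | (∀ n, f n ≤ 1) ∧
    ∀ e y : ℕ, y ∈ (Denumerable.ofNat Nat.Partrec.Code e).eval e → f e ≠ y}

/-- `C_A`: injective enumerations of subsets of `A`. -/
def CProb (A : Set ℕ) : Set (ℕ → ℕ) :=
  {f | Function.Injective f ∧ Set.range f ⊆ A}

/-!
An enumeration of `A` that is computable would make `A` r.e., so `E_A` has no recursive member.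
If `Φ` reduces `{f}` to `E_A`, then `⟨n, y⟩` belongs to the graph of `f` exactly when `Φ`
outputs `y` on input `n` from some finite list of elements of `A`: every such list extends to an
enumeration of `A`, on which `Φ` computes `f`. This makes the graph of `f` enumeration reducible
to `A`, so quasiminimality forces `f` to be recursive.
-/

theorem REset.empty : REset ∅ := by
  obtain ⟨c, hc⟩ := Nat.Partrec.Code.exists_code.1 Nat.Partrec.none
  exact ⟨c, by ext x; simp [hc]⟩

theorem REset.range {g : ℕ → ℕ} (hg : Computable g) : REset (Set.range g) := by
  have hsearch : Partrec fun x => Nat.rfind fun n => Part.some (g n == x) :=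
    Partrec.rfind <| Computable₂.partrec₂ <|
      Primrec.beq.to_comp.comp (hg.comp Computable.snd) Computable.fst
  obtain ⟨c, hc⟩ := Nat.Partrec.Code.exists_code.1 (Partrec.nat_iff.1 hsearch)
  refine ⟨c, Set.ext fun x => ?_⟩
  rw [hc]
  exact (Nat.rfind_dom.trans (by simp)).symm

theorem exists_enumOpApply_eq {α : Type*} [Primcodable α] {p : ℕ × List ℕ →. α}
    (hp : Partrec p) (B : Set ℕ) :
    ∃ e, enumOpApply e B = {x | ∃ σ : List ℕ, (p (x, σ)).Dom ∧ ∀ y ∈ σ, y ∈ B} := by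
  have hq : Partrec fun m : ℕ => (p (m.unpair.1, Denumerable.ofNat (List ℕ) m.unpair.2)).map
      fun _ => 0 :=
    Partrec.map (hp.comp <| Computable.pair (Computable.fst.comp Computable.unpair)
      ((Computable.ofNat (List ℕ)).comp (Computable.snd.comp Computable.unpair)))
      (Computable.const 0).to₂
  obtain ⟨c, hc⟩ := Nat.Partrec.Code.exists_code.1 (Partrec.nat_iff.1 hq)
  refine ⟨Encodable.encode c, ?_⟩
  ext x
  simp only [enumOpApply, Denumerable.ofNat_encode, hc, Nat.unpair_pair, Part.map_Dom,
    Set.mem_ofPred_eq]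
  exact ⟨fun ⟨u, hu, hB⟩ => ⟨_, hu, hB⟩,
    fun ⟨σ, hσ, hB⟩ => ⟨Encodable.encode σ, by simpa using hσ, by simpa using hB⟩⟩

theorem TuringFunctional.Total.eq_of_mem {Φ : TuringFunctional} {g f : ℕ → ℕ}
    (hΦ : Φ.Total g f) {m n y : ℕ} (hy : y ∈ Φ.app ((List.range m).map g, n)) : y = f n := by
  have prefix_of_le {a b : ℕ} (hab : a ≤ b) : (List.range a).map g <+: (List.range b).map g := by
    rw [List.prefix_iff_eq_take, List.length_map, List.length_range, ← List.map_take,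
      List.take_range, min_eq_left hab]
  obtain ⟨k, hk⟩ := hΦ n
  exact Part.mem_unique (Φ.mono (prefix_of_le (le_max_left m k)) hy)
    (Φ.mono (prefix_of_le (le_max_right m k)) hk)

theorem exists_mem_EProb_strPrefix {A : Set ℕ} (hA : A.Nonempty) {σ : List ℕ}
    (hσ : ∀ y ∈ σ, y ∈ A) : ∃ g ∈ EProb A, strPrefix σ g := by
  obtain ⟨g₀, rfl⟩ := (Set.to_countable A).exists_eq_range hA
  refine ⟨fun k => σ[k]?.getD (g₀ (k - σ.length)), ?_, ?_⟩
  · apply (Set.range_subset_iff.2 fun k => ?_).antisymm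
    · rintro _ ⟨m, rfl⟩
      exact ⟨σ.length + m, by simp⟩
    · rcases hk : σ[k]? with _ | y
      · exact ⟨_, rfl⟩
      · exact hσ y (List.mem_of_getElem? hk)
  · refine List.ext_getElem (by simp) fun i hi _ => ?_
    simp_all

theorem bind_beq_dom (p : Part ℕ) (y : ℕ) :
    (p.bind fun z => bif z == y then Part.some 0 else Part.none).Dom ↔ y ∈ p := by
  rw [Part.dom_iff_mem]
  constructor
  · rintro ⟨b, hb⟩
    obtain ⟨z, hz, hb⟩ := Part.mem_bind_iff.1 hb
    rcases h : (z == y) with _ | _ <;> rw [h] at hb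
    · simp at hb
    · rwa [← beq_iff_eq.1 h]
  · exact fun hy => ⟨0, Part.mem_bind_iff.2 ⟨y, hy, by simp⟩⟩

theorem enumLE_graphSet_of_medvedevLE {A : Set ℕ} (hA : A.Nonempty) {f : ℕ → ℕ}
    (h : MedvedevLE {f} (EProb A)) : EnumLE (graphSet f) A := by
  obtain ⟨Φ, hΦ⟩ := h
  have total (g : ℕ → ℕ) (hg : g ∈ EProb A) : Φ.Total g f := by
    obtain ⟨f', hf', rfl⟩ := hΦ g hg
    exact hf'
  -- `p (x, σ)` halts iff `Φ` outputs `x.unpair.2` on input `x.unpair.1` from oracle prefix `σ`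
  have hp : Partrec fun q : ℕ × List ℕ => (Φ.app (q.2, q.1.unpair.1)).bind
      fun z => bif z == q.1.unpair.2 then Part.some 0 else Part.none :=
    Partrec.bind (Φ.partrec.comp <| Computable.pair Computable.snd
        (Computable.fst.comp (Computable.unpair.comp Computable.fst)))
      (Partrec.cond (Primrec.beq.to_comp.comp Computable.snd
          (Computable.snd.comp (Computable.unpair.comp (Computable.fst.comp Computable.fst))))
        (Computable.const 0).partrec Partrec.none)
  obtain ⟨e, he⟩ := exists_enumOpApply_eq hp A
  refine ⟨e, he.trans ?_⟩
  ext x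
  simp only [bind_beq_dom, Set.mem_ofPred_eq, graphSet, Set.mem_range]
  constructor
  · rintro ⟨σ, hx, hσ⟩
    obtain ⟨g, hg, hσg⟩ := exists_mem_EProb_strPrefix hA hσ
    rw [strPrefix] at hσg
    rw [← hσg] at hx
    exact ⟨x.unpair.1, by rw [← (total g hg).eq_of_mem hx, Nat.pair_unpair]⟩
  · rintro ⟨n, rfl⟩
    obtain ⟨g, rfl⟩ := (Set.to_countable A).exists_eq_range hA
    obtain ⟨k, hk⟩ := total g rfl n
    exact ⟨(List.range k).map g, by simpa using hk, by simp⟩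

/-- If `A` is quasiminimal, then `𝔈_A` is strictly above the least Medvedev degree
(`E_A` has no recursive member), and `{f} ≰ₛ E_A` for every nonrecursive total `f`. -/
theorem stmt1 (A : Set ℕ) (hA : Quasiminimal A) :
    (¬ ∃ g ∈ EProb A, Computable g) ∧
      ∀ f : ℕ → ℕ, ¬ Computable f → ¬ MedvedevLE {f} (EProb A) := by
  obtain ⟨hnotRE, hgraph⟩ := hA
  refine ⟨fun ⟨g, hg, hgc⟩ => hnotRE (hg ▸ REset.range hgc), fun f hf hle => hf ?_⟩
  have hne : A.Nonempty := Set.nonempty_iff_ne_empty.2 fun h => hnotRE (h ▸ REset.empty)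
  exact hgraph f (enumLE_graphSet_of_medvedevLE hne hle)
end

section
/- Every uniform mass problem has meet-irreducible Medvedev degree: if A is a uniform mass problem and B, C are mass problems with deg_s(A) ≥ deg_s(B) ∧ deg_s(C), then deg_s(A) ≥ deg_s(B) or deg_s(A) ≥ deg_s(C). -/
/-! Let `Φ` witness `0⌢B ∪ 1⌢C ≤ₛ A`. If on some `g ∈ A` the functional `Φ` outputs `0` first,
already on a prefix `σ` of `g`, then it sends every member of `A_σ` into `0⌢B`, so
`B ≤ₛ A_σ ≤ₛ A` by uniformity. Otherwise it sends all of `A` into `1⌢C`, so `C ≤ₛ A`.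
The real work is the transitivity of `≤ₛ`: the composite `Φ ∘ Ψ` is obtained by a dovetailed
search over candidate output strings `τ` of `Ψ` together with a bound on the computation time. -/

open Filter Encodable Denumerable Nat.Partrec

lemma List.map_range_prefix_map_range (g : ℕ → ℕ) {a b : ℕ} (h : a ≤ b) :
    (List.range a).map g <+: (List.range b).map g := by
  simpa [List.take_range, min_eq_left h] using ((List.range b).take_prefix a).map g

namespace TuringFunctional

variable (Φ : TuringFunctional)

lemma eq_of_mem_app {τ τ' : List ℕ} {n y y' : ℕ} (hc : τ <+: τ' ∨ τ' <+: τ)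
    (h : y ∈ Φ.app (τ, n)) (h' : y' ∈ Φ.app (τ', n)) : y = y' := by
  rcases hc with hp | hp
  · exact Part.mem_unique (Φ.mono hp h) h'
  · exact Part.mem_unique h (Φ.mono hp h')

lemma eventually_mem_app {g : ℕ → ℕ} {k n y : ℕ} (h : y ∈ Φ.app ((List.range k).map g, n)) :
    ∀ᶠ K in atTop, y ∈ Φ.app ((List.range K).map g, n) :=
  eventually_atTop.2 ⟨k, fun _ hK => Φ.mono (List.map_range_prefix_map_range g hK) h⟩

def Outputs (σ τ : List ℕ) : Prop := ∀ i (h : i < τ.length), τ[i] ∈ Φ.app (σ, i)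

lemma exists_code : ∃ c : Code, ∀ p, c.eval (encode p) = Φ.app p := by
  obtain ⟨c, hc⟩ := Code.exists_code.1 Φ.partrec
  refine ⟨c, fun p => ?_⟩
  rw [hc]
  simp only [encodek, Part.coe_some, Part.bind_some]
  exact Part.map_id' (fun _ => rfl) _

noncomputable def code : Code := Classical.choose Φ.exists_code

variable {Φ}

lemma Total.apply_eq {g f : ℕ → ℕ} {k n y : ℕ} (hf : Φ.Total g f)
    (hy : y ∈ Φ.app ((List.range k).map g, n)) : f n = y := by
  obtain ⟨k', hk'⟩ := hf n
  exact Φ.eq_of_mem_app ((le_total k' k).imp (List.map_range_prefix_map_range g)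
    (List.map_range_prefix_map_range g)) hk' hy

lemma Outputs.prefix_or_prefix {σ τ τ' : List ℕ} (h : Φ.Outputs σ τ) (h' : Φ.Outputs σ τ') :
    τ <+: τ' ∨ τ' <+: τ := by
  suffices key : ∀ {τ τ'}, Φ.Outputs σ τ → Φ.Outputs σ τ' → τ.length ≤ τ'.length → τ <+: τ' from
    (le_total τ.length τ'.length).imp (key h h') (key h' h)
  intro τ τ' h h' hlen
  rw [List.prefix_iff_eq_take]
  refine List.ext_getElem (by simp [hlen]) fun i h₁ _ => ?_
  rw [List.getElem_take]
  exact Part.mem_unique (h i h₁) (h' i (h₁.trans_le hlen))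

lemma eventually_mem_evaln_code {p : List ℕ × ℕ} {y : ℕ} (h : y ∈ Φ.app p) :
    ∀ᶠ s in atTop, y ∈ Code.evaln s Φ.code (encode p) := by
  rw [← Classical.choose_spec Φ.exists_code p, Code.evaln_complete] at h
  obtain ⟨s, hs⟩ := h
  exact eventually_atTop.2 ⟨s, fun _ ht => Code.evaln_mono ht hs⟩

lemma mem_app_of_mem_evaln_code {p : List ℕ × ℕ} {y s : ℕ}
    (h : y ∈ Code.evaln s Φ.code (encode p)) : y ∈ Φ.app p :=
  Classical.choose_spec Φ.exists_code p ▸ Code.evaln_sound h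

variable (Φ) in
/-- `w = (τ, s)`: a candidate output string `τ` of `Ψ` on the oracle string `p.1`, and a
step bound `s` for all the computations involved. -/
noncomputable def compStep (Ψ : TuringFunctional) (p w : List ℕ × ℕ) : Option ℕ :=
  if (List.range w.1.length).map (fun i => Code.evaln w.2 Ψ.code (encode (p.1, i))) = w.1.map some
  then Code.evaln w.2 Φ.code (encode (w.1, p.2)) else none

variable (Φ) in
lemma primrec_compStep (Ψ : TuringFunctional) :
    Primrec fun q : (List ℕ × ℕ) × ℕ => compStep Φ Ψ q.1 (ofNat (List ℕ × ℕ) q.2) := by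
  have hw : Primrec fun q : (List ℕ × ℕ) × ℕ => ofNat (List ℕ × ℕ) q.2 :=
    (Primrec.ofNat _).comp Primrec.snd
  have hτ := Primrec.fst.comp hw
  have hs := Primrec.snd.comp hw
  have hΨ : Primrec fun q : (List ℕ × ℕ) × ℕ => (List.range (ofNat (List ℕ × ℕ) q.2).1.length).map
      fun i => Code.evaln (ofNat (List ℕ × ℕ) q.2).2 Ψ.code (encode (q.1.1, i)) :=
    Primrec.list_map (Primrec.list_range.comp (Primrec.list_length.comp hτ))
      (Code.primrec_evaln.comp (((hs.comp Primrec.fst).pair (Primrec.const _)).pair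
        (Primrec.encode.comp ((Primrec.fst.comp (Primrec.fst.comp Primrec.fst)).pair
          Primrec.snd)))).to₂
  have hsome : Primrec fun q : (List ℕ × ℕ) × ℕ => (ofNat (List ℕ × ℕ) q.2).1.map some :=
    Primrec.list_map hτ (Primrec.option_some.comp Primrec.snd).to₂
  exact Primrec.ite (Primrec.eq.comp hΨ hsome)
    (Code.primrec_evaln.comp ((hs.pair (Primrec.const _)).pair
      (Primrec.encode.comp (hτ.pair (Primrec.snd.comp Primrec.fst)))))
    (Primrec.const none)

variable {Ψ : TuringFunctional} {σ τ : List ℕ} {n y : ℕ}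

lemma outputs_and_mem_of_compStep {w : List ℕ × ℕ} (h : y ∈ compStep Φ Ψ (σ, n) w) :
    Ψ.Outputs σ w.1 ∧ y ∈ Φ.app (w.1, n) := by
  unfold compStep at h
  split_ifs at h with hτ
  · refine ⟨fun i hi => mem_app_of_mem_evaln_code (s := w.2) ?_, mem_app_of_mem_evaln_code h⟩
    simpa [hi] using congrArg (·[i]?) hτ
  · exact absurd h (Option.not_mem_none y)

lemma exists_compStep_of_outputs (hτ : Ψ.Outputs σ τ) (hy : y ∈ Φ.app (τ, n)) :
    ∃ s, compStep Φ Ψ (σ, n) (τ, s) = some y := by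
  have hΨ : ∀ᶠ s in atTop, ∀ i : Fin τ.length,
      τ[i] ∈ Code.evaln s Ψ.code (encode (σ, (i : ℕ))) :=
    eventually_all.2 fun i => eventually_mem_evaln_code (hτ i i.2)
  obtain ⟨s, hsΨ, hsΦ⟩ := (hΨ.and (eventually_mem_evaln_code hy)).exists
  refine ⟨s, ?_⟩
  rw [compStep, if_pos]
  · exact hsΦ
  refine List.ext_getElem (by simp) fun i h₁ _ => ?_
  simpa using hsΨ ⟨i, by simpa using h₁⟩

variable (Φ) in
noncomputable def compApp (Ψ : TuringFunctional) (p : List ℕ × ℕ) : Part ℕ :=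
  Nat.rfindOpt fun m => compStep Φ Ψ p (ofNat _ m)

lemma mem_compApp : y ∈ compApp Φ Ψ (σ, n) ↔ ∃ τ, Ψ.Outputs σ τ ∧ y ∈ Φ.app (τ, n) := by
  refine ⟨fun h => ?_, fun ⟨τ, hτ, hy⟩ => ?_⟩
  · obtain ⟨m, hm⟩ := Nat.rfindOpt_spec h
    exact ⟨_, outputs_and_mem_of_compStep hm⟩
  obtain ⟨s, hs⟩ := exists_compStep_of_outputs hτ hy
  have hdom : (compApp Φ Ψ (σ, n)).Dom :=
    Nat.rfindOpt_dom.2 ⟨encode (τ, s), y, by simpa using hs⟩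
  obtain ⟨m, hm⟩ := Nat.rfindOpt_spec (Part.get_mem hdom)
  obtain ⟨hτ', hy'⟩ := outputs_and_mem_of_compStep hm
  rw [Φ.eq_of_mem_app (hτ.prefix_or_prefix hτ') hy hy']
  exact Part.get_mem hdom

variable (Φ Ψ) in
noncomputable def comp : TuringFunctional where
  app := compApp Φ Ψ
  partrec := Partrec.rfindOpt (primrec_compStep Φ Ψ).to_comp.to₂
  mono {σ σ'} _ _ hσ hy := by
    obtain ⟨τ, hτ, hy⟩ := mem_compApp.1 hy
    exact mem_compApp.2 ⟨τ, fun i hi => Ψ.mono hσ (hτ i hi), hy⟩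

lemma Total.comp {g f₁ f₂ : ℕ → ℕ} (hΨ : Ψ.Total g f₁) (hΦ : Φ.Total f₁ f₂) :
    (Φ.comp Ψ).Total g f₂ := by
  intro n
  obtain ⟨k, hk⟩ := hΦ n
  have hτ : ∀ᶠ K in atTop, ∀ i : Fin k, f₁ i ∈ Ψ.app ((List.range K).map g, i) :=
    eventually_all.2 fun i => by
      obtain ⟨k', hk'⟩ := hΨ i
      exact Ψ.eventually_mem_app hk'
  obtain ⟨K, hK⟩ := hτ.exists
  exact ⟨K, mem_compApp.2 ⟨_, fun i hi => by simpa using hK ⟨i, by simpa using hi⟩, hk⟩⟩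

end TuringFunctional

lemma MedvedevLE.trans {X Y Z : Set (ℕ → ℕ)} (hXY : MedvedevLE X Y) (hYZ : MedvedevLE Y Z) :
    MedvedevLE X Z := by
  obtain ⟨Φ, hΦ⟩ := hXY
  obtain ⟨Ψ, hΨ⟩ := hYZ
  refine ⟨Φ.comp Ψ, fun g hg => ?_⟩
  obtain ⟨f₁, hf₁, hf₁Y⟩ := hΨ g hg
  obtain ⟨f₂, hf₂, hf₂X⟩ := hΦ f₁ hf₁Y
  exact ⟨f₂, hf₁.comp hf₂, hf₂X⟩

lemma medvedevLE_image_consFun (i : ℕ) (D : Set (ℕ → ℕ)) : MedvedevLE D (consFun i '' D) := by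
  refine ⟨⟨fun p => (p.1[p.2 + 1]? : Option ℕ), ?_, ?_⟩, ?_⟩
  · exact Computable.ofOption
      (Primrec.list_getElem?.comp Primrec.fst (Primrec.succ.comp Primrec.snd)).to_comp
  · intro σ τ n y hσ hy
    simp only [Part.mem_ofOption, Option.mem_def] at hy ⊢
    obtain ⟨hn, rfl⟩ := List.getElem?_eq_some_iff.1 hy
    exact List.prefix_iff_getElem?.1 hσ _ hn
  · rintro g ⟨d, hd, rfl⟩
    exact ⟨d, fun n => ⟨n + 2, by simp [consFun]⟩, hd⟩

variable {X B C : Set (ℕ → ℕ)} {Φ : TuringFunctional}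

lemma medvedevLE_of_meetProb_of_head_zero (hΦ : ∀ g ∈ X, ∃ f, Φ.Total g f ∧ f ∈ meetProb B C)
    (h0 : ∀ g ∈ X, ∃ k, 0 ∈ Φ.app ((List.range k).map g, 0)) : MedvedevLE B X := by
  refine (medvedevLE_image_consFun 0 B).trans ⟨Φ, fun g hg => ?_⟩
  obtain ⟨f, hf, ⟨b, hb, rfl⟩ | ⟨c, -, rfl⟩⟩ := hΦ g hg
  · exact ⟨_, hf, b, hb, rfl⟩
  · obtain ⟨k, hk⟩ := h0 g hg
    exact absurd (hf.apply_eq hk) (by simp [consFun])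

lemma medvedevLE_of_meetProb_of_head_ne_zero (hΦ : ∀ g ∈ X, ∃ f, Φ.Total g f ∧ f ∈ meetProb B C)
    (h0 : ∀ g ∈ X, ∀ k, 0 ∉ Φ.app ((List.range k).map g, 0)) : MedvedevLE C X := by
  refine (medvedevLE_image_consFun 1 C).trans ⟨Φ, fun g hg => ?_⟩
  obtain ⟨f, hf, ⟨b, -, rfl⟩ | ⟨c, hc, rfl⟩⟩ := hΦ g hg
  · obtain ⟨k, hk⟩ := hf 0
    exact absurd hk (h0 g hg k)
  · exact ⟨_, hf, c, hc, rfl⟩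

/-- Every uniform mass problem has meet-irreducible Medvedev degree: if
`deg(A) ≥ deg(B) ∧ deg(C)` then `deg(A) ≥ deg(B)` or `deg(A) ≥ deg(C)`. -/
theorem stmt2 (A B C : Set (ℕ → ℕ)) (hA : UniformProb A)
    (h : MedvedevLE (meetProb B C) A) :
    MedvedevLE B A ∨ MedvedevLE C A := by
  obtain ⟨Φ, hΦ⟩ := h
  by_cases hzero : ∃ g ∈ A, ∃ k, 0 ∈ Φ.app ((List.range k).map g, 0)
  · obtain ⟨g₀, hg₀, k, hk⟩ := hzero
    set σ := (List.range k).map g₀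
    have hσ : strPrefix σ g₀ := by simp [strPrefix, σ]
    refine .inl ((medvedevLE_of_meetProb_of_head_zero (fun g hg => hΦ g hg.1)
      fun g hg => ⟨σ.length, ?_⟩).trans (hA σ ⟨g₀, hg₀, hσ⟩))
    rwa [hg.2]
  · push Not at hzero
    exact .inr (medvedevLE_of_meetProb_of_head_ne_zero hΦ hzero)
end

section
/- In the Medvedev degrees, every degree of solvability deg_s({f}) (for f ∈ ω^ω) is meet-irreducible, and every degree of enumerability 𝔈_A (for nonempty A ⊆ ω) is meet-irreducible. -/
/-! Auxiliary machinery for the proof. -/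

lemma prefix_map_range {g : ℕ → ℕ} {k m : ℕ} (h : k ≤ m) :
    (List.range k).map g <+: (List.range m).map g := by
  have : List.range k <+: List.range m := by
    have h2 : m = k + (m - k) := by omega
    rw [h2, List.range_add]
    exact List.prefix_append _ _
  exact this.map g

/-- Determinacy: if `Φ` is total on `g` with value `f`, and `y` is the output
of `Φ` on some finite prefix of `g`, then `f n = y`. -/
lemma eq_of_total_prefix (Φ : TuringFunctional) {g f : ℕ → ℕ} (hT : Φ.Total g f)
    {m n y : ℕ} (hy : y ∈ Φ.app ((List.range m).map g, n)) : f n = y := by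
  obtain ⟨k, hk⟩ := hT n
  rcases le_total k m with h | h
  · exact Part.mem_unique (Φ.mono (prefix_map_range h) hk) hy
  · exact Part.mem_unique hk (Φ.mono (prefix_map_range h) hy)

/-- The functional `g ↦ (Φ(σ ⌢ g))⁺` (prepend `σ` to the oracle, shift outputs). -/
def shiftFn (Φ : TuringFunctional) (σ : List ℕ) : TuringFunctional where
  app p := Φ.app (σ ++ p.1, p.2 + 1)
  partrec := Φ.partrec.comp
    (((Primrec.list_append.to_comp).comp (Computable.const σ) Computable.fst).pair
      (Computable.succ.comp Computable.snd))
  mono := by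
    rintro τ₁ τ₂ n y ⟨t, rfl⟩ hy
    exact Φ.mono ⟨t, by rw [List.append_assoc]⟩ hy

lemma range_map_split {g₀ g : ℕ → ℕ} {k₀ m : ℕ} (h : k₀ ≤ m) :
    (List.range m).map (fun n => if n < k₀ then g₀ n else g (n - k₀)) =
      (List.range k₀).map g₀ ++ (List.range (m - k₀)).map g := by
  apply List.ext_getElem
  · simp; omega
  · intro i h1 h2
    simp only [List.length_map, List.length_range] at h1 h2
    by_cases hi : i < k₀
    · rw [List.getElem_append_left (by simpa using hi)]
      simp [hi]
    · rw [List.getElem_append_right (by simpa using hi)]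
      simp [hi]

lemma consFun_zero (i : ℕ) (b : ℕ → ℕ) : consFun i b 0 = i := rfl
lemma consFun_succ (i : ℕ) (b : ℕ → ℕ) (n : ℕ) : consFun i b (n + 1) = b n := rfl

/-- Key lemma for singletons. -/
lemma skey {f : ℕ → ℕ} {D E : Set (ℕ → ℕ)} {i j : ℕ}
    (Φ : TuringFunctional)
    (hΦ : ∀ g ∈ ({f} : Set (ℕ → ℕ)), ∃ f', Φ.Total g f' ∧
      f' ∈ consFun i '' D ∪ consFun j '' E) :
    MedvedevLE D {f} ∨ MedvedevLE E {f} := by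
  obtain ⟨f₀, hT, hf₀⟩ := hΦ f (Set.mem_singleton f)
  rcases hf₀ with ⟨b, hb, hbe⟩ | ⟨c, hc, hce⟩
  · left
    refine ⟨shiftFn Φ [], ?_⟩
    intro g hg
    rw [Set.mem_singleton_iff] at hg; subst hg
    refine ⟨b, ?_, hb⟩
    intro n
    obtain ⟨k, hk⟩ := hT (n + 1)
    refine ⟨k, ?_⟩
    have hbn : b n = f₀ (n + 1) := by rw [← hbe]; rfl
    rw [hbn]
    exact hk
  · right
    refine ⟨shiftFn Φ [], ?_⟩
    intro g hg
    rw [Set.mem_singleton_iff] at hg; subst hg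
    refine ⟨c, ?_, hc⟩
    intro n
    obtain ⟨k, hk⟩ := hT (n + 1)
    refine ⟨k, ?_⟩
    have hcn : c n = f₀ (n + 1) := by rw [← hce]; rfl
    rw [hcn]
    exact hk

/-- Key lemma for problems of enumerability. -/
lemma ekey {A : Set ℕ} {D E : Set (ℕ → ℕ)} {i j : ℕ} (hij : i ≠ j)
    (Φ : TuringFunctional)
    (hΦ : ∀ g ∈ EProb A, ∃ f, Φ.Total g f ∧ f ∈ consFun i '' D ∪ consFun j '' E)
    {g₀ : ℕ → ℕ} (hg₀ : g₀ ∈ EProb A) {f₀ : ℕ → ℕ} (hT : Φ.Total g₀ f₀)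
    {b : ℕ → ℕ} (hbe : f₀ = consFun i b) (hb : b ∈ D) :
    MedvedevLE D (EProb A) := by
  have hg₀r : Set.range g₀ = A := hg₀
  obtain ⟨k₀, hk₀⟩ := hT 0
  set σ := (List.range k₀).map g₀ with hσdef
  refine ⟨shiftFn Φ σ, ?_⟩
  intro g hg
  have hgr : Set.range g = A := hg
  set g' : ℕ → ℕ := fun n => if n < k₀ then g₀ n else g (n - k₀) with hg'def
  have hg'A : g' ∈ EProb A := by
    show Set.range g' = A
    ext x
    simp only [Set.mem_range]
    constructor
    · rintro ⟨n, rfl⟩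
      by_cases h : n < k₀
      · simp only [hg'def, h, if_pos]
        exact hg₀r ▸ Set.mem_range_self n
      · simp only [hg'def, h, if_neg, if_false]
        exact hgr ▸ Set.mem_range_self (n - k₀)
    · intro hx
      rw [← hgr] at hx
      obtain ⟨m, rfl⟩ := hx
      refine ⟨m + k₀, ?_⟩
      have hnm : ¬ (m + k₀ < k₀) := by omega
      simp [hg'def, hnm]
  obtain ⟨f', hT', hf'⟩ := hΦ g' hg'A
  have hσ' : (List.range k₀).map g' = σ := by
    rw [hσdef]
    apply List.map_congr_left
    intro a ha
    rw [List.mem_range] at ha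
    simp [hg'def, ha]
  have h0 : f' 0 = f₀ 0 := eq_of_total_prefix Φ hT' (by rw [hσ']; exact hk₀)
  have hi0 : f₀ 0 = i := by rw [hbe]; rfl
  rcases hf' with ⟨b', hb', hbe'⟩ | ⟨c', hc', hce'⟩
  · refine ⟨b', ?_, hb'⟩
    intro n
    obtain ⟨k, hk⟩ := hT' (n + 1)
    refine ⟨max k k₀ - k₀, ?_⟩
    have hk' : f' (n + 1) ∈ Φ.app ((List.range (max k k₀)).map g', n + 1) :=
      Φ.mono (prefix_map_range (le_max_left _ _)) hk
    have heq : (List.range (max k k₀)).map g' =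
        σ ++ (List.range (max k k₀ - k₀)).map g := by
      rw [hg'def, hσdef]
      exact range_map_split (le_max_right _ _)
    rw [heq] at hk'
    have hbn : b' n = f' (n + 1) := by rw [← hbe']; rfl
    rw [hbn]
    exact hk'
  · exfalso
    apply hij
    have hj : f' 0 = j := by rw [← hce']; rfl
    rw [h0, hi0] at hj
    exact hj

/-- Every degree of solvability is meet-irreducible, and every degree of
enumerability is meet-irreducible. -/
theorem stmt3 :
    (∀ f : ℕ → ℕ, MeetIrred {f}) ∧
      (∀ A : Set ℕ, A.Nonempty → MeetIrred (EProb A)) := by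
  constructor
  · intro f
    rintro ⟨B, C, ⟨hBCX, -⟩, ⟨-, hBX⟩, ⟨-, hCX⟩⟩
    obtain ⟨Φ, hΦ⟩ := hBCX
    rcases skey Φ hΦ with h | h
    · exact hBX h
    · exact hCX h
  · intro A hA
    rintro ⟨B, C, ⟨hBCX, -⟩, ⟨-, hBX⟩, ⟨-, hCX⟩⟩
    obtain ⟨Φ, hΦ⟩ := hBCX
    obtain ⟨a₀, ha₀⟩ := hA
    classical
    set g₀ : ℕ → ℕ := fun n => if n ∈ A then n else a₀ with hg₀def
    have hg₀ : g₀ ∈ EProb A := by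
      show Set.range g₀ = A
      ext x
      simp only [Set.mem_range]
      constructor
      · rintro ⟨n, rfl⟩
        by_cases h : n ∈ A
        · simpa [hg₀def, h] using h
        · simpa [hg₀def, h] using ha₀
      · intro hx
        exact ⟨x, by simp [hg₀def, hx]⟩
    obtain ⟨f₀, hT, hf₀⟩ := hΦ g₀ hg₀
    rcases hf₀ with ⟨b, hb, hbe⟩ | ⟨c, hc, hce⟩
    · exact hBX (ekey (i := 0) (j := 1) (by norm_num) Φ hΦ hg₀ hT hbe.symm hb)
    · refine hCX (ekey (E := B) (i := 1) (j := 0) one_ne_zero Φ ?_ hg₀ hT hce.symm hc)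
      intro g hg
      obtain ⟨f', h1, h2⟩ := hΦ g hg
      exact ⟨f', h1, h2.elim Or.inr Or.inl⟩
end

section
/- The Medvedev degree of DNR_2 is closed, meet-irreducible, and uncountable, yet it is not a degree of enumerability; in fact, it does not bound any nonzero degree of enumerability: if A ⊆ ω is nonempty and E_A ≤_s DNR_2, then E_A has a recursive member. -/
/-!
`DNR₂` is a nonempty `Π⁰₁` class in Cantor space, hence compact, and it is closed under replacing
an initial segment of a member by an initial segment of another member. Compactness (König's
lemma) makes whatever is computed uniformly from all of `DNR₂` effective: if `Φ` maps `DNR₂` into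
`E_A`, then `x ∈ A` iff at some length `l` every node of the tree of `DNR₂` already makes `Φ`
output `x`, so `A` is `Σ⁰₁` and has a computable enumeration; in the same way a function that
`Φ` computes from every member of `DNR₂` is computable. Since no member of `DNR₂` is computable,
`DNR₂` is then not of the degree of any `E_A`.

For meet-irreducibility, the first bit of `Φ(f)`, which selects a side of `0⌢B ∪ 1⌢C`, is fixed
by an initial segment `σ` of `f`, and patching `σ` into every oracle solves that side. For
uncountability, if `B = {f₀, f₁, …}` and `Φ` maps `DNR₂` into `B`, the closed sets
`{g ∈ DNR₂ | Φ(g) = fᵢ}` cover `DNR₂`, so by Baire category one contains a basic open set of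
`DNR₂`; patching makes that `fᵢ` computable from all of `DNR₂`, hence computable, and then
`DNR₂ ≤ B` yields a computable member of `DNR₂`.
-/

/-- `Σ⁰₁` predicates, presented by a primitive recursive matrix rather than as Mathlib's `REPred`,
so that the closure properties below are a matter of composing primitive recursive functions. -/
def Semidecidable {α : Type*} [Primcodable α] (p : α → Prop) : Prop :=
  ∃ R : α → ℕ → Prop, PrimrecRel R ∧ ∀ a, p a ↔ ∃ s, R a s

namespace Semidecidable

variable {α β : Type*} [Primcodable α] [Primcodable β]

theorem of_iff {p q : α → Prop} (hp : Semidecidable p) (h : ∀ a, p a ↔ q a) :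
    Semidecidable q :=
  let ⟨R, hR, hpR⟩ := hp
  ⟨R, hR, fun a => (h a).symm.trans (hpR a)⟩

theorem of_primrecPred {p : α → Prop} (hp : PrimrecPred p) : Semidecidable p :=
  ⟨fun a _ => p a, hp.comp Primrec.fst, fun _ => ⟨fun h => ⟨0, h⟩, fun ⟨_, h⟩ => h⟩⟩

theorem comp {p : β → Prop} (hp : Semidecidable p) {f : α → β} (hf : Primrec f) :
    Semidecidable fun a => p (f a) := by
  obtain ⟨R, hR, hpR⟩ := hp
  exact ⟨fun a s => R (f a) s, hR.comp (hf.comp Primrec.fst) Primrec.snd, fun a => hpR (f a)⟩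

theorem or {p q : α → Prop} (hp : Semidecidable p) (hq : Semidecidable q) :
    Semidecidable fun a => p a ∨ q a := by
  obtain ⟨R, hR, hpR⟩ := hp
  obtain ⟨S, hS, hqS⟩ := hq
  exact ⟨fun a s => R a s ∨ S a s, hR.or hS,
    fun a => (or_congr (hpR a) (hqS a)).trans exists_or.symm⟩

theorem and {p q : α → Prop} (hp : Semidecidable p) (hq : Semidecidable q) :
    Semidecidable fun a => p a ∧ q a := by
  obtain ⟨R, hR, hpR⟩ := hp
  obtain ⟨S, hS, hqS⟩ := hq
  refine ⟨fun a s => R a s.unpair.1 ∧ S a s.unpair.2,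
    (hR.comp Primrec.fst (Primrec.fst.comp (Primrec.unpair.comp Primrec.snd))).and
      (hS.comp Primrec.fst (Primrec.snd.comp (Primrec.unpair.comp Primrec.snd))),
    fun a => (and_congr (hpR a) (hqS a)).trans ?_⟩
  constructor
  · rintro ⟨⟨s, hs⟩, ⟨t, ht⟩⟩
    exact ⟨Nat.pair s t, by simpa using hs, by simpa using ht⟩
  · rintro ⟨s, hs, ht⟩
    exact ⟨⟨_, hs⟩, ⟨_, ht⟩⟩

theorem exists_nat {p : α → ℕ → Prop} (hp : Semidecidable fun x : α × ℕ => p x.1 x.2) :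
    Semidecidable fun a => ∃ n, p a n := by
  obtain ⟨R, hR, hpR⟩ := hp
  refine ⟨fun a s => R (a, s.unpair.1) s.unpair.2,
    hR.comp (Primrec.pair Primrec.fst (Primrec.fst.comp (Primrec.unpair.comp Primrec.snd)))
      (Primrec.snd.comp (Primrec.unpair.comp Primrec.snd)), fun a => ?_⟩
  refine (exists_congr fun n => hpR (a, n)).trans ⟨?_, ?_⟩
  · rintro ⟨n, s, hs⟩
    exact ⟨Nat.pair n s, by simpa using hs⟩
  · rintro ⟨s, hs⟩
    exact ⟨_, _, hs⟩

/-- Finitely many witnessing stages are all below one bound `s`, below which the matrix is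
searched. -/
theorem forall_mem_list {p : α → β → Prop} (hp : Semidecidable fun x : α × β => p x.1 x.2)
    {L : α → List β} (hL : Primrec L) : Semidecidable fun a => ∀ b ∈ L a, p a b := by
  obtain ⟨R, hR, hpR⟩ := hp
  have hR' : PrimrecRel fun (t : ℕ) (y : β × (α × ℕ)) => R (y.2.1, y.1) t :=
    hR.comp (Primrec.pair (Primrec.fst.comp (Primrec.snd.comp Primrec.snd))
      (Primrec.fst.comp Primrec.snd)) Primrec.fst
  have hrange : Primrec₂ fun (_ : β) (x : α × ℕ) => List.range x.2 :=
    (Primrec.list_range.comp (Primrec.snd.comp Primrec.snd)).to₂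
  have hbounded : PrimrecRel fun (b : β) (x : α × ℕ) => ∃ t ∈ List.range x.2, R (x.1, b) t :=
    hR'.exists_mem_list.comp₂ hrange Primrec₂.pair
  refine ⟨fun a s => ∀ b ∈ L a, ∃ t ∈ List.range s, R (a, b) t,
    hbounded.forall_mem_list.comp₂ (hL.comp Primrec.fst).to₂ Primrec₂.pair, fun a => ?_⟩
  simp only [List.mem_range]
  constructor
  · intro h
    choose! t ht using fun b hb => (hpR (a, b)).1 (h b hb)
    refine ⟨((L a).map t).sum + 1, fun b hb => ⟨t b, ?_, ht b hb⟩⟩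
    have := List.le_sum_of_mem (List.mem_map_of_mem (f := t) hb)
    omega
  · exact fun ⟨s, hs⟩ b hb => (hpR (a, b)).2 <| (hs b hb).imp fun t ht => ht.2

theorem computable_of_graph {f : α → ℕ}
    (h : Semidecidable fun x : α × ℕ => f x.1 = x.2) : Computable f := by
  classical
  obtain ⟨R, hR, hfR⟩ := h
  let opt : α → ℕ → Option ℕ := fun a m =>
    if R (a, m.unpair.1) m.unpair.2 then some m.unpair.1 else none
  have hopt : Computable₂ opt := by
    refine (Primrec.ite ?_
      (Primrec.option_some.comp (Primrec.fst.comp (Primrec.unpair.comp Primrec.snd)))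
      (Primrec.const none)).to_comp
    exact hR.comp (Primrec.pair Primrec.fst (Primrec.fst.comp (Primrec.unpair.comp Primrec.snd)))
      (Primrec.snd.comp (Primrec.unpair.comp Primrec.snd))
  refine (Partrec.rfindOpt hopt).of_eq fun a => ?_
  obtain ⟨s, hs⟩ := (hfR (a, f a)).1 rfl
  have hdom : (Nat.rfindOpt (opt a)).Dom :=
    Nat.rfindOpt_dom.2 ⟨Nat.pair (f a) s, f a, by simp [opt, hs]⟩
  obtain ⟨y, hy⟩ := Part.dom_iff_mem.1 hdom
  obtain ⟨m, hm⟩ := Nat.rfindOpt_spec hy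
  have hRm : R (a, m.unpair.1) m.unpair.2 ∧ m.unpair.1 = y := by
    simpa [opt, Option.mem_def] using hm
  have : f a = y := (hfR (a, y)).2 ⟨m.unpair.2, hRm.2 ▸ hRm.1⟩
  exact Part.eq_some_iff.2 (this ▸ hy)

theorem exists_computable_range {A : Set ℕ} (h : Semidecidable (· ∈ A)) (hA : A.Nonempty) :
    ∃ g : ℕ → ℕ, Computable g ∧ Set.range g = A := by
  classical
  obtain ⟨R, hR, hAR⟩ := h
  obtain ⟨a₀, ha₀⟩ := hA
  refine ⟨fun m => if R m.unpair.1 m.unpair.2 then m.unpair.1 else a₀,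
    (Primrec.ite (hR.comp (Primrec.fst.comp Primrec.unpair) (Primrec.snd.comp Primrec.unpair))
      (Primrec.fst.comp Primrec.unpair) (Primrec.const a₀)).to_comp, ?_⟩
  ext x
  constructor
  · rintro ⟨m, rfl⟩
    dsimp only
    split_ifs with hm
    · exact (hAR _).2 ⟨_, hm⟩
    · exact ha₀
  · intro hx
    obtain ⟨s, hs⟩ := (hAR x).1 hx
    exact ⟨Nat.pair x s, by simp [hs]⟩

end Semidecidable

theorem Partrec.semidecidable_mem {α σ : Type*} [Primcodable α] [Primcodable σ] {F : α →. σ}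
    (hF : Partrec F) : Semidecidable fun x : α × σ => x.2 ∈ F x.1 := by
  obtain ⟨c, hc⟩ := Nat.Partrec.Code.exists_code.1 (Partrec.bind_decode₂_iff.1 hF)
  refine ⟨fun x s =>
      Nat.Partrec.Code.evaln s c (Encodable.encode x.1) = some (Encodable.encode x.2),
    Primrec.eq.comp (Nat.Partrec.Code.primrec_evaln.comp (Primrec.pair
      (Primrec.pair Primrec.snd (Primrec.const c))
      (Primrec.encode.comp (Primrec.fst.comp Primrec.fst))))
      (Primrec.option_some.comp (Primrec.encode.comp (Primrec.snd.comp Primrec.fst))),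
    fun x => ?_⟩
  have heval : x.2 ∈ F x.1 ↔ Encodable.encode x.2 ∈ c.eval (Encodable.encode x.1) := by
    simp [hc]
  exact heval.trans Nat.Partrec.Code.evaln_complete

def initSeg (g : ℕ → ℕ) (k : ℕ) : List ℕ := (List.range k).map g

@[simp] theorem initSeg_length (g : ℕ → ℕ) (k : ℕ) : (initSeg g k).length = k := by
  simp [initSeg]

theorem initSeg_succ (g : ℕ → ℕ) (k : ℕ) : initSeg g (k + 1) = initSeg g k ++ [g k] := by
  simp [initSeg, List.range_succ]

theorem initSeg_prefix (g : ℕ → ℕ) {k k' : ℕ} (h : k ≤ k') : initSeg g k <+: initSeg g k' := by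
  rw [initSeg, initSeg, ← Nat.add_sub_cancel' h, List.range_add, List.map_append]
  exact List.prefix_append _ _

theorem strPrefix_initSeg (g : ℕ → ℕ) (k : ℕ) : strPrefix (initSeg g k) g := by
  rw [strPrefix, initSeg_length, initSeg]

theorem getD_eq_of_strPrefix {σ : List ℕ} {f : ℕ → ℕ} (h : strPrefix σ f) {i : ℕ}
    (hi : i < σ.length) (d : ℕ) : σ.getD i d = f i := by
  rw [← h]
  simp [hi]

theorem continuous_initSeg (k : ℕ) : Continuous fun g : ℕ → ℕ => initSeg g k := by
  induction k with
  | zero => exact continuous_const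
  | succ k ih =>
    simp only [initSeg_succ]
    exact (continuous_of_discreteTopology (f := fun p : List ℕ × ℕ => p.1 ++ [p.2])).comp
      (ih.prodMk (continuous_apply k))

theorem strPrefix_initSeg_iff {g h : ℕ → ℕ} {k : ℕ} :
    strPrefix (initSeg g k) h ↔ h ∈ PiNat.cylinder g k := by
  simp [strPrefix, initSeg, List.map_inj_left, PiNat.mem_cylinder_iff]

theorem Computable.initSeg {f : ℕ → ℕ} (hf : Computable f) : Computable (initSeg f) := by
  refine (Computable.nat_rec Computable.id (Computable.const ([] : List ℕ))
    (Computable.list_concat.comp (Computable.snd.comp Computable.snd)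
      (hf.comp (Computable.fst.comp Computable.snd))).to₂).of_eq fun k => ?_
  induction k with
  | zero => rfl
  | succ k ih => rw [initSeg_succ, ← ih]; rfl

def patch (σ : List ℕ) (g : ℕ → ℕ) : ℕ → ℕ := fun n => σ.getD n (g n)

theorem initSeg_patch {σ : List ℕ} {k : ℕ} (h : σ.length ≤ k) (g : ℕ → ℕ) :
    initSeg (patch σ g) k = σ ++ (initSeg g k).drop σ.length := by
  apply List.ext_getElem
  · simp only [initSeg_length, List.length_append, List.length_drop]; omega
  · intro i h1 _
    simp only [initSeg_length] at h1
    by_cases hi : i < σ.length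
    · simp [initSeg, patch, hi, List.getElem_append_left]
    · rw [List.getElem_append_right (Nat.le_of_not_lt hi)]
      simp [initSeg, patch, hi, Nat.add_sub_cancel' (Nat.le_of_not_lt hi)]

theorem strPrefix_patch (σ : List ℕ) (g : ℕ → ℕ) : strPrefix σ (patch σ g) := by
  rw [strPrefix, ← initSeg, initSeg_patch le_rfl]
  simp

namespace TuringFunctional

theorem mem_unique (Φ : TuringFunctional) {g : ℕ → ℕ} {k k' n y y' : ℕ}
    (h : y ∈ Φ.app (initSeg g k, n)) (h' : y' ∈ Φ.app (initSeg g k', n)) : y = y' := by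
  rcases le_total k k' with hk | hk
  · exact Part.mem_unique (Φ.mono (initSeg_prefix g hk) h) h'
  · exact Part.mem_unique h (Φ.mono (initSeg_prefix g hk) h')

theorem Total.eq_of_mem_s5 {Φ : TuringFunctional} {g f : ℕ → ℕ} (hT : Φ.Total g f) {k n y : ℕ}
    (h : y ∈ Φ.app (initSeg g k, n)) : f n = y :=
  let ⟨_, hk⟩ := hT n
  Φ.mem_unique hk h

theorem Total.computable {Φ : TuringFunctional} {g f : ℕ → ℕ} (hT : Φ.Total g f)
    (hg : Computable g) : Computable f := by
  apply Semidecidable.computable_of_graph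
  have hF : Partrec fun p : ℕ × ℕ => Φ.app (initSeg g p.2, p.1) :=
    Φ.partrec.comp ((hg.initSeg.comp Computable.snd).pair Computable.fst)
  refine Semidecidable.of_iff (p := fun x : ℕ × ℕ => ∃ k, x.2 ∈ Φ.app (initSeg g k, x.1))
    (Semidecidable.exists_nat (p := fun (x : ℕ × ℕ) k => x.2 ∈ Φ.app (initSeg g k, x.1))
      ((Partrec.semidecidable_mem hF).comp (Primrec.pair
        (Primrec.pair (Primrec.fst.comp Primrec.fst) Primrec.snd) (Primrec.snd.comp Primrec.fst))))
    fun x => ⟨fun ⟨_, hk⟩ => hT.eq_of_mem_s5 hk, fun hx => hx ▸ hT x.1⟩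

protected def id : TuringFunctional where
  app p := (p.1[p.2]? : Part ℕ)
  partrec := Computable.ofOption (Primrec.list_getElem?.comp Primrec.fst Primrec.snd).to_comp
  mono := by
    rintro σ τ n y ⟨t, rfl⟩ hy
    rw [Part.mem_ofOption] at hy ⊢
    rwa [List.getElem?_append_left (List.getElem?_eq_some_iff.1 hy).1]

theorem total_id (g : ℕ → ℕ) : TuringFunctional.id.Total g g := fun n =>
  ⟨n + 1, by simp [TuringFunctional.id]⟩

def tail (Φ : TuringFunctional) : TuringFunctional where
  app p := Φ.app (p.1, p.2 + 1)
  partrec := Φ.partrec.comp (Computable.fst.pair (Computable.succ.comp Computable.snd))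
  mono h := Φ.mono h

theorem Total.tail {Φ : TuringFunctional} {g f : ℕ → ℕ} (hT : Φ.Total g f) :
    Φ.tail.Total g fun n => f (n + 1) := fun n => hT (n + 1)

def withPrefix (Φ : TuringFunctional) (σ : List ℕ) : TuringFunctional where
  app p := Φ.app (σ ++ p.1.drop σ.length, p.2)
  partrec := Φ.partrec.comp (Computable.pair
    ((Primrec.list_append.comp (Primrec.const σ)
      (Primrec.list_drop.comp (Primrec.const σ.length) Primrec.fst)).to_comp) Computable.snd)
  mono {_ _ _ _} h hy := by
    refine Φ.mono ?_ hy
    obtain ⟨t, ht⟩ := h.drop σ.length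
    exact ⟨t, by rw [List.append_assoc, ht]⟩

theorem Total.withPrefix {Φ : TuringFunctional} {σ : List ℕ} {g f : ℕ → ℕ}
    (hT : Φ.Total (patch σ g) f) : (Φ.withPrefix σ).Total g f := by
  intro n
  obtain ⟨k, hk⟩ := hT n
  refine ⟨max k σ.length, ?_⟩
  have := Φ.mono (initSeg_prefix _ (le_max_left k σ.length)) hk
  rwa [initSeg_patch (le_max_right _ _)] at this

end TuringFunctional

theorem medvedevLE_refl (A : Set (ℕ → ℕ)) : MedvedevLE A A :=
  ⟨TuringFunctional.id, fun g hg => ⟨g, TuringFunctional.total_id g, hg⟩⟩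

def DNR2Value (e m : ℕ) : Prop :=
  m ≤ 1 ∧ ∀ y ∈ (Denumerable.ofNat Nat.Partrec.Code e).eval e, m ≠ y

theorem mem_DNR2_iff {f : ℕ → ℕ} : f ∈ DNR2 ↔ ∀ e, DNR2Value e (f e) :=
  ⟨fun h e => ⟨h.1 e, h.2 e⟩, fun h => ⟨fun e => (h e).1, fun e => (h e).2⟩⟩

theorem isClosed_DNR2 : IsClosed DNR2 := by
  have : DNR2 = ⋂ e, (fun f : ℕ → ℕ => f e) ⁻¹' {m | DNR2Value e m} := by
    ext f
    simp [mem_DNR2_iff]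
  rw [this]
  exact isClosed_iInter fun e => (isClosed_discrete _).preimage (continuous_apply e)

theorem isCompact_DNR2 : IsCompact DNR2 := by
  refine (isCompact_univ_pi fun _ => (Set.finite_Iic 1).isCompact).of_isClosed_subset
    isClosed_DNR2 fun f hf => ?_
  exact Set.mem_univ_pi.2 fun i => Set.mem_Iic.2 (hf.1 i)

theorem DNR2_nonempty : DNR2.Nonempty := by
  classical
  refine ⟨fun e => if 0 ∈ (Denumerable.ofNat Nat.Partrec.Code e).eval e then 1 else 0,
    mem_DNR2_iff.2 fun e => ⟨by split_ifs <;> simp, fun y hy => ?_⟩⟩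
  split_ifs with h0
  · rw [Part.mem_unique hy h0]; simp
  · rintro rfl; exact h0 hy

theorem not_computable_of_mem_DNR2 {f : ℕ → ℕ} (hf : f ∈ DNR2) : ¬ Computable f := by
  intro hc
  obtain ⟨c, hc⟩ := Nat.Partrec.Code.exists_code.1 (Partrec.nat_iff.1 hc)
  refine hf.2 (Encodable.encode c) _ ?_ rfl
  rw [Denumerable.ofNat_encode, hc]
  exact Part.mem_some _

def IsDNR2Prefix (σ : List ℕ) : Prop := ∃ f ∈ DNR2, strPrefix σ f

theorem IsDNR2Prefix.initSeg {f : ℕ → ℕ} (hf : f ∈ DNR2) (k : ℕ) : IsDNR2Prefix (initSeg f k) :=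
  ⟨f, hf, strPrefix_initSeg f k⟩

theorem patch_mem_DNR2 {σ : List ℕ} (hσ : IsDNR2Prefix σ) {g : ℕ → ℕ} (hg : g ∈ DNR2) :
    patch σ g ∈ DNR2 := by
  obtain ⟨f, hf, hσf⟩ := hσ
  refine mem_DNR2_iff.2 fun e => ?_
  by_cases he : e < σ.length
  · rw [patch, getD_eq_of_strPrefix hσf he]
    exact mem_DNR2_iff.1 hf e
  · rw [patch, List.getD_eq_default _ _ (Nat.le_of_not_lt he)]
    exact mem_DNR2_iff.1 hg e

theorem isDNR2Prefix_iff {σ : List ℕ} :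
    IsDNR2Prefix σ ↔ ∀ i < σ.length, DNR2Value i (σ.getD i 0) := by
  constructor
  · rintro ⟨f, hf, hσf⟩ i hi
    rw [getD_eq_of_strPrefix hσf hi]
    exact mem_DNR2_iff.1 hf i
  · intro h
    obtain ⟨f, hf⟩ := DNR2_nonempty
    refine ⟨patch σ f, mem_DNR2_iff.2 fun e => ?_, strPrefix_patch σ f⟩
    by_cases he : e < σ.length
    · rw [patch, List.getD_eq_getElem _ _ he, ← List.getD_eq_getElem _ 0 he]
      exact h e he
    · rw [patch, List.getD_eq_default _ _ (Nat.le_of_not_lt he)]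
      exact mem_DNR2_iff.1 hf e

theorem semidecidable_not_isDNR2Prefix : Semidecidable fun σ => ¬ IsDNR2Prefix σ := by
  have hdiag : Partrec fun e => (Denumerable.ofNat Nat.Partrec.Code e).eval e :=
    Nat.Partrec.Code.eval_part.comp (Computable.ofNat _) Computable.id
  have hgetD : Primrec fun x : List ℕ × ℕ => x.1.getD x.2 0 :=
    (Primrec.list_getD 0).comp Primrec.fst Primrec.snd
  refine Semidecidable.of_iff (Semidecidable.exists_nat
    (p := fun σ i => i < σ.length ∧ (1 < σ.getD i 0 ∨
      σ.getD i 0 ∈ (Denumerable.ofNat Nat.Partrec.Code i).eval i))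
    (.and (.of_primrecPred (Primrec.nat_lt.comp Primrec.snd (Primrec.list_length.comp Primrec.fst)))
      (.or (.of_primrecPred (Primrec.nat_lt.comp (Primrec.const 1) hgetD))
        ((Partrec.semidecidable_mem hdiag).comp (Primrec.pair Primrec.snd hgetD)))))
    fun σ => ?_
  simp only [isDNR2Prefix_iff, DNR2Value, not_forall, not_and_or, not_le, exists_prop, not_not,
    exists_eq_right']

def binaryStrings : ℕ → List (List ℕ)
  | 0 => [[]]
  | l + 1 => (binaryStrings l).flatMap fun σ => [0 :: σ, 1 :: σ]

theorem mem_binaryStrings {l : ℕ} {σ : List ℕ} :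
    σ ∈ binaryStrings l ↔ σ.length = l ∧ ∀ x ∈ σ, x ≤ 1 := by
  induction l generalizing σ with
  | zero =>
    simp only [binaryStrings, List.mem_singleton, List.length_eq_zero_iff]
    exact ⟨fun h => ⟨h, by simp [h]⟩, And.left⟩
  | succ l ih =>
    cases σ with
    | nil => simp [binaryStrings]
    | cons a τ =>
      simp only [binaryStrings, List.mem_flatMap, List.mem_cons, List.cons.injEq,
        List.not_mem_nil, or_false, ih, List.length_cons, forall_eq_or_imp]
      constructor
      · rintro ⟨_, ⟨rfl, hτ⟩, ⟨rfl, rfl⟩ | ⟨rfl, rfl⟩⟩ <;> simpa using hτ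
      · rintro ⟨hl, ha, hτ⟩
        refine ⟨τ, ⟨by omega, hτ⟩, ?_⟩
        rcases Nat.le_one_iff_eq_zero_or_eq_one.1 ha with rfl | rfl <;> simp

theorem primrec_binaryStrings : Primrec binaryStrings := by
  have hstep : Primrec₂ fun (_ : ℕ) (p : ℕ × List (List ℕ)) =>
      p.2.flatMap fun σ => [0 :: σ, 1 :: σ] :=
    Primrec.to₂ <| Primrec.list_flatMap (Primrec.snd.comp Primrec.snd) <| Primrec.to₂ <|
      Primrec.list_cons.comp (Primrec.list_cons.comp (Primrec.const 0) Primrec.snd) <|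
        Primrec.list_cons.comp (Primrec.list_cons.comp (Primrec.const 1) Primrec.snd)
          (Primrec.const [])
  refine (Primrec.nat_rec' Primrec.id (Primrec.const [[]]) hstep).of_eq fun l => ?_
  induction l with
  | zero => rfl
  | succ l ih => simp only [id] at ih ⊢; rw [binaryStrings, ← ih]

/-- König's lemma for the tree of `DNR₂`. -/
theorem exists_length_of_forall_DNR2 {R : List ℕ → Prop} (hR : ∀ σ τ, σ <+: τ → R σ → R τ)
    (h : ∀ g ∈ DNR2, ∃ k, R (initSeg g k)) :
    ∃ l, ∀ σ, IsDNR2Prefix σ → σ.length = l → R σ := by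
  by_contra! hbad
  let C : ℕ → Set (ℕ → ℕ) := fun l => DNR2 ∩ {g | ¬ R (initSeg g l)}
  have hclosed : ∀ l, IsClosed (C l) := fun l =>
    isClosed_DNR2.inter ((isClosed_discrete {σ | ¬ R σ}).preimage (continuous_initSeg l))
  have hanti : ∀ l, C (l + 1) ⊆ C l := fun l g ⟨hg, hgl⟩ =>
    ⟨hg, fun hl => hgl (hR _ _ (initSeg_prefix g l.le_succ) hl)⟩
  have hne : ∀ l, (C l).Nonempty := by
    intro l
    obtain ⟨σ, ⟨f, hf, hσf⟩, rfl, hσ⟩ := hbad l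
    refine ⟨f, hf, ?_⟩
    rwa [Set.mem_ofPred_eq, initSeg, hσf]
  obtain ⟨g, hg⟩ := IsCompact.nonempty_iInter_of_sequence_nonempty_isCompact_isClosed C hanti hne
    (isCompact_DNR2.of_isClosed_subset (hclosed 0) Set.inter_subset_left) hclosed
  rw [Set.mem_iInter] at hg
  obtain ⟨k, hk⟩ := h g (hg 0).1
  exact (hg k).2 hk

/-- By König's lemma it suffices to search for a length `l` such that every binary string of
length `l` either satisfies `R a` or leaves the tree of `DNR₂`, a `Σ⁰₁` event. -/
theorem semidecidable_forall_DNR2 {α : Type*} [Primcodable α] {R : α → List ℕ → Prop}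
    (hR : Semidecidable fun x : α × List ℕ => R x.1 x.2)
    (hmono : ∀ a σ τ, σ <+: τ → R a σ → R a τ) :
    Semidecidable fun a => ∀ g ∈ DNR2, ∃ k, R a (initSeg g k) := by
  refine Semidecidable.of_iff (Semidecidable.exists_nat
    (p := fun a l => ∀ σ ∈ binaryStrings l, ¬ IsDNR2Prefix σ ∨ R a σ)
    (Semidecidable.forall_mem_list (p := fun x σ => ¬ IsDNR2Prefix σ ∨ R x.1 σ)
      ((semidecidable_not_isDNR2Prefix.comp Primrec.snd).or
        (hR.comp (Primrec.pair (Primrec.fst.comp Primrec.fst) Primrec.snd)))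
      (primrec_binaryStrings.comp Primrec.snd))) fun a => ⟨?_, fun h => ?_⟩
  · rintro ⟨l, hl⟩ g hg
    refine ⟨l, (hl _ (mem_binaryStrings.2 ⟨initSeg_length g l, ?_⟩)).resolve_left
      (not_not.2 (IsDNR2Prefix.initSeg hg l))⟩
    simp only [initSeg, List.mem_map]
    rintro _ ⟨i, -, rfl⟩
    exact hg.1 i
  · obtain ⟨l, hl⟩ := exists_length_of_forall_DNR2 (hmono a) h
    exact ⟨l, fun σ hσ => (em' _).imp_right fun hpre => hl σ hpre (mem_binaryStrings.1 hσ).1⟩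

theorem computable_of_forall_DNR2_total {Φ : TuringFunctional} {f : ℕ → ℕ}
    (h : ∀ g ∈ DNR2, Φ.Total g f) : Computable f := by
  obtain ⟨g₀, hg₀⟩ := DNR2_nonempty
  refine Semidecidable.computable_of_graph (Semidecidable.of_iff
    (semidecidable_forall_DNR2 (R := fun (x : ℕ × ℕ) σ => x.2 ∈ Φ.app (σ, x.1))
      ((Partrec.semidecidable_mem Φ.partrec).comp (Primrec.pair
        (Primrec.pair Primrec.snd (Primrec.fst.comp Primrec.fst)) (Primrec.snd.comp Primrec.fst)))
      fun _ _ _ => Φ.mono) fun x => ⟨fun hx => ?_, ?_⟩)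
  · obtain ⟨k, hk⟩ := hx g₀ hg₀
    exact (h g₀ hg₀).eq_of_mem_s5 hk
  · rintro hx g hg
    exact hx ▸ h g hg x.1

theorem semidecidable_of_medvedevLE_DNR2 {A : Set ℕ} (h : MedvedevLE (EProb A) DNR2) :
    Semidecidable (· ∈ A) := by
  obtain ⟨Φ, hΦ⟩ := h
  obtain ⟨g₀, hg₀⟩ := DNR2_nonempty
  have hR : Semidecidable fun x : ℕ × List ℕ => ∃ n < x.2.length, x.1 ∈ Φ.app (x.2, n) :=
    Semidecidable.exists_nat (p := fun (x : ℕ × List ℕ) n => n < x.2.length ∧ x.1 ∈ Φ.app (x.2, n))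
      (.and (.of_primrecPred (Primrec.nat_lt.comp Primrec.snd
          (Primrec.list_length.comp (Primrec.snd.comp Primrec.fst))))
        ((Partrec.semidecidable_mem Φ.partrec).comp (Primrec.pair
          (Primrec.pair (Primrec.snd.comp Primrec.fst) Primrec.snd)
          (Primrec.fst.comp Primrec.fst))))
  refine Semidecidable.of_iff (semidecidable_forall_DNR2
    (R := fun x σ => ∃ n < σ.length, x ∈ Φ.app (σ, n)) hR fun x σ τ hστ ⟨n, hn, hx⟩ =>
    ⟨n, hn.trans_le hστ.length_le, Φ.mono hστ hx⟩) fun x => ⟨fun hx => ?_, fun hx g hg => ?_⟩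
  · obtain ⟨k, n, -, hn⟩ := hx g₀ hg₀
    obtain ⟨f, hT, rfl⟩ := hΦ g₀ hg₀
    exact ⟨n, hT.eq_of_mem_s5 hn⟩
  · obtain ⟨f, hT, rfl⟩ := hΦ g hg
    obtain ⟨n, rfl⟩ := hx
    obtain ⟨k, hk⟩ := hT n
    refine ⟨max k (n + 1), n, by simp, Φ.mono (initSeg_prefix g (le_max_left _ _)) hk⟩

theorem mem_meetProb_iff {B C : Set (ℕ → ℕ)} {h : ℕ → ℕ} :
    h ∈ meetProb B C ↔
      (h 0 = 0 ∧ (fun n => h (n + 1)) ∈ B) ∨ (h 0 = 1 ∧ (fun n => h (n + 1)) ∈ C) := by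
  have hcons : h = consFun (h 0) fun n => h (n + 1) := funext fun n => by cases n <;> rfl
  constructor
  · rintro (⟨b, hb, rfl⟩ | ⟨c, hc, rfl⟩)
    exacts [.inl ⟨rfl, hb⟩, .inr ⟨rfl, hc⟩]
  · rintro (⟨h0, hB⟩ | ⟨h0, hC⟩) <;> rw [hcons, h0]
    exacts [.inl ⟨_, hB, rfl⟩, .inr ⟨_, hC, rfl⟩]

/-- The first bit of the output, which says which side of the meet is solved, is fixed by a
finite initial segment `σ` of the oracle; patching `σ` into every oracle then solves that side. -/
theorem meetIrred_of_patch_mem {P : Set (ℕ → ℕ)} (hP : P.Nonempty)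
    (hpatch : ∀ σ, (∃ f ∈ P, strPrefix σ f) → ∀ g ∈ P, patch σ g ∈ P) : MeetIrred P := by
  rintro ⟨B, C, ⟨⟨Φ, hΦ⟩, -⟩, ⟨-, hBP⟩, ⟨-, hCP⟩⟩
  obtain ⟨f, hf⟩ := hP
  obtain ⟨h, hT, hh⟩ := hΦ f hf
  obtain ⟨k, hk⟩ := hT 0
  set σ := initSeg f k
  have hside : ∀ g ∈ P, ∃ h', Φ.Total (patch σ g) h' ∧ h' ∈ meetProb B C ∧ h' 0 = h 0 := by
    intro g hg
    obtain ⟨h', hT', hh'⟩ := hΦ _ (hpatch σ ⟨f, hf, strPrefix_initSeg f k⟩ g hg)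
    have hσ : initSeg (patch σ g) σ.length = σ := strPrefix_patch σ g
    have hk' : h 0 ∈ Φ.app (initSeg (patch σ g) σ.length, 0) := by rw [hσ]; exact hk
    exact ⟨h', hT', hh', hT'.eq_of_mem_s5 hk'⟩
  have hreduce : ∀ D : Set (ℕ → ℕ),
      (∀ h' ∈ meetProb B C, h' 0 = h 0 → (fun n => h' (n + 1)) ∈ D) → MedvedevLE D P :=
    fun D hD => ⟨(Φ.withPrefix σ).tail, fun g hg =>
      let ⟨h', hT', hh', h0⟩ := hside g hg
      ⟨_, hT'.withPrefix.tail, hD h' hh' h0⟩⟩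
  rcases mem_meetProb_iff.1 hh with ⟨h0, -⟩ | ⟨h0, -⟩
  · exact hBP <| hreduce B fun h' hh' h'0 =>
      ((mem_meetProb_iff.1 hh').resolve_right fun ⟨h'1, _⟩ => by omega).2
  · exact hCP <| hreduce C fun h' hh' h'0 =>
      ((mem_meetProb_iff.1 hh').resolve_left fun ⟨h'1, _⟩ => by omega).2

theorem isClosed_setOf_forall_mem_app (Φ : TuringFunctional) (f : ℕ → ℕ) :
    IsClosed {g | ∀ n k y, y ∈ Φ.app (initSeg g k, n) → f n = y} := by
  have : {g | ∀ n k y, y ∈ Φ.app (initSeg g k, n) → f n = y} =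
      ⋂ n, ⋂ k, (fun g => initSeg g k) ⁻¹' {σ | ∀ y ∈ Φ.app (σ, n), f n = y} := by
    ext g
    simp
  rw [this]
  exact isClosed_iInter fun n => isClosed_iInter fun k =>
    (isClosed_discrete _).preimage (continuous_initSeg k)

/-- Baire category in the compact space `P`: the closed sets `{g ∈ P | Φ(g) = f}`, `f ∈ B`, cover
`P`, so one of them contains a basic open set of `P`. -/
theorem exists_strPrefix_total_of_countable {P B : Set (ℕ → ℕ)} (hP : IsCompact P)
    (hne : P.Nonempty) (hB : B.Countable) {Φ : TuringFunctional}
    (hΦ : ∀ g ∈ P, ∃ f, Φ.Total g f ∧ f ∈ B) :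
    ∃ f ∈ B, ∃ σ, (∃ g ∈ P, strPrefix σ g) ∧ ∀ h ∈ P, strPrefix σ h → Φ.Total h f := by
  obtain ⟨g₀, hg₀⟩ := hne
  obtain ⟨e, rfl⟩ := hB.exists_eq_range (let ⟨f, _, hf⟩ := hΦ g₀ hg₀; ⟨f, hf⟩)
  have : CompactSpace P := isCompact_iff_compactSpace.1 hP
  have : Nonempty P := ⟨⟨g₀, hg₀⟩⟩
  let D : ℕ → Set P := fun i =>
    Subtype.val ⁻¹' {g | ∀ n k y, y ∈ Φ.app (initSeg g k, n) → e i n = y}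
  have hcover : ⋃ i, D i = Set.univ := by
    refine Set.eq_univ_of_forall fun g => ?_
    obtain ⟨f, hT, i, rfl⟩ := hΦ g g.2
    exact Set.mem_iUnion.2 ⟨i, fun n k y hy => hT.eq_of_mem_s5 hy⟩
  obtain ⟨i, g, hg⟩ := nonempty_interior_of_iUnion_of_closed
    (fun i => (isClosed_setOf_forall_mem_app Φ (e i)).preimage continuous_subtype_val) hcover
  obtain ⟨U, hU, hUD⟩ := (mem_nhds_subtype P g _).1 (mem_interior_iff_mem_nhds.1 hg)
  obtain ⟨_, ⟨x, k, rfl⟩, hgx, hxU⟩ := (PiNat.isTopologicalBasis_cylinders _).mem_nhds_iff.1 hU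
  rw [PiNat.mem_cylinder_iff_eq] at hgx
  refine ⟨e i, ⟨i, rfl⟩, initSeg g k, ⟨g, g.2, strPrefix_initSeg g k⟩, fun h hh hgh => ?_⟩
  have hcompat : (⟨h, hh⟩ : P) ∈ D i :=
    hUD (show h ∈ U from hxU (hgx ▸ strPrefix_initSeg_iff.1 hgh))
  obtain ⟨f, hT, -⟩ := hΦ h hh
  convert hT using 1
  funext n
  obtain ⟨k', hk'⟩ := hT n
  exact hcompat n k' _ hk'

theorem not_computable_of_medvedevLE_DNR2 {B : Set (ℕ → ℕ)} (h : MedvedevLE DNR2 B) {g : ℕ → ℕ}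
    (hg : g ∈ B) : ¬ Computable g := fun hc =>
  let ⟨_, hΨ⟩ := h
  let ⟨_, hT, hd⟩ := hΨ g hg
  not_computable_of_mem_DNR2 hd (hT.computable hc)

/-- The Medvedev degree of `DNR₂` is closed, meet-irreducible, and uncountable,
yet not a degree of enumerability; in fact it does not bound any nonzero degree
of enumerability. -/
theorem stmt5 :
    (∃ C : Set (ℕ → ℕ), IsClosed C ∧ MedvedevEquiv C DNR2) ∧
      MeetIrred DNR2 ∧
      (¬ ∃ B : Set (ℕ → ℕ), B.Countable ∧ MedvedevEquiv B DNR2) ∧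
      (¬ ∃ A : Set ℕ, A.Nonempty ∧ MedvedevEquiv (EProb A) DNR2) ∧
      (∀ A : Set ℕ, A.Nonempty → MedvedevLE (EProb A) DNR2 →
        ∃ g ∈ EProb A, Computable g) := by
  have hEnum : ∀ A : Set ℕ, A.Nonempty → MedvedevLE (EProb A) DNR2 →
      ∃ g ∈ EProb A, Computable g := fun A hA h =>
    let ⟨g, hg, hrange⟩ := (semidecidable_of_medvedevLE_DNR2 h).exists_computable_range hA
    ⟨g, hrange, hg⟩
  refine ⟨⟨DNR2, isClosed_DNR2, medvedevLE_refl _, medvedevLE_refl _⟩,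
    meetIrred_of_patch_mem DNR2_nonempty fun σ => patch_mem_DNR2, ?_, ?_, hEnum⟩
  · rintro ⟨B, hB, ⟨Φ, hΦ⟩, hDB⟩
    obtain ⟨f, hfB, σ, hσ, hf⟩ :=
      exists_strPrefix_total_of_countable isCompact_DNR2 DNR2_nonempty hB hΦ
    exact not_computable_of_medvedevLE_DNR2 hDB hfB <| computable_of_forall_DNR2_total
      fun g hg => (hf _ (patch_mem_DNR2 hσ hg) (strPrefix_patch σ g)).withPrefix
  · rintro ⟨A, hA, hAD, hDA⟩
    obtain ⟨g, hg, hc⟩ := hEnum A hA hAD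
    exact not_computable_of_medvedevLE_DNR2 hDA hg hc
end

section
/- If f : ω → ω is total, then there is a set B ⊆ ω with B ≡_e graph(f) such that C_B ≡_s E_{graph(f)}. -/
/-! Take `B` to be the set of codes of the finite initial segments `f ↾ n`. A segment is a finite
set of graph pairs with arguments `0, …, n - 1`, and a graph pair `⟨i, f i⟩` can be read off any
segment longer than `i`; this gives both enumeration reductions. An enumeration of `graph(f)`
computes the injective sequence `n ↦ f ↾ n`, outputting `f ↾ n` once all pairs with arguments
below `n` have appeared. Conversely, an injective sequence of segments contains arbitrarily long
ones, and `⟨m, f m⟩` is read off the first segment longer than `m`. -/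

open Encodable Denumerable

theorem PrimrecRel.listFind? {α β : Type*} [Primcodable α] [Primcodable β]
    {R : α → β → Prop} [DecidableRel R] (hR : PrimrecRel R) :
    Primrec₂ fun (L : List α) b => L.find? fun a => R a b :=
  (Primrec.list_head?.comp hR.listFilter).of_eq fun _ => List.head?_filter

theorem exists_enumOpApply_eq_s7 {R : ℕ → List ℕ → Prop} (hR : PrimrecRel R) :
    ∃ e, ∀ S, enumOpApply e S = {x | ∃ D : List ℕ, R x D ∧ ∀ y ∈ D, y ∈ S} := by
  obtain ⟨hdec, hR⟩ := hR
  let φ (n : ℕ) : Part ℕ :=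
    bif @decide _ (hdec (n.unpair.1, ofNat (List ℕ) n.unpair.2)) then Part.some 0
    else Part.none
  have hφ : Partrec φ :=
    Partrec.cond
      (hR.comp (Primrec.pair (Primrec.fst.comp Primrec.unpair)
        ((Primrec.ofNat _).comp (Primrec.snd.comp Primrec.unpair)))).to_comp
      (Partrec.const' _) Partrec.none
  obtain ⟨c, hc⟩ := Nat.Partrec.Code.exists_code.1 (Partrec.nat_iff.1 hφ)
  have hdom (x : ℕ) (D : List ℕ) : (c.eval (Nat.pair x (encode D))).Dom ↔ R x D := by
    by_cases h : R x D <;> simp [hc, φ, h]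
  refine ⟨encode c, fun S => Set.ext fun x => ?_⟩
  simp only [enumOpApply, ofNat_encode, Set.mem_ofPred_eq]
  exact ⟨fun ⟨u, hu, hS⟩ => ⟨ofNat (List ℕ) u, (hdom _ _).1 (by simpa using hu), hS⟩,
    fun ⟨D, hD, hS⟩ => ⟨encode D, by simpa using (hdom x D).2 hD, by simpa using hS⟩⟩

def TuringFunctional.ofOption (F : List ℕ × ℕ → Option ℕ) (hF : Computable F)
    (hmono : ∀ {σ τ : List ℕ} {n y : ℕ}, σ <+: τ → F (σ, n) = some y → F (τ, n) = some y) :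
    TuringFunctional where
  app p := F p
  partrec := hF.ofOption
  mono h hy := Part.mem_coe.2 (hmono h (Part.mem_coe.1 hy))

theorem medvedevLE_of_option {A B : Set (ℕ → ℕ)} (F : List ℕ × ℕ → Option ℕ)
    (hF : Computable F)
    (hmono : ∀ {σ τ : List ℕ} {n y : ℕ}, σ <+: τ → F (σ, n) = some y → F (τ, n) = some y)
    (h : ∀ g ∈ B, ∃ f ∈ A, ∀ n, ∃ k, F ((List.range k).map g, n) = some (f n)) :
    MedvedevLE A B := by
  refine ⟨.ofOption F hF hmono, fun g hg => ?_⟩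
  obtain ⟨f, hf, hF⟩ := h g hg
  exact ⟨f, fun n => (hF n).imp fun _ => Part.mem_coe.2, hf⟩

theorem mem_graphSet {f : ℕ → ℕ} {y : ℕ} : y ∈ graphSet f ↔ f y.unpair.1 = y.unpair.2 :=
  ⟨by rintro ⟨n, rfl⟩; simp, fun h => ⟨y.unpair.1, by simp only [h, Nat.pair_unpair]⟩⟩

def prefixCode (f : ℕ → ℕ) (n : ℕ) : ℕ := encode ((List.range n).map f)

@[simp]
theorem ofNat_prefixCode (f : ℕ → ℕ) (n : ℕ) :
    ofNat (List ℕ) (prefixCode f n) = (List.range n).map f :=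
  ofNat_encode _

theorem prefixCode_length_ofNat {f : ℕ → ℕ} {y : ℕ} (hy : y ∈ Set.range (prefixCode f)) :
    prefixCode f (ofNat (List ℕ) y).length = y := by
  obtain ⟨n, rfl⟩ := hy
  simp

theorem prefixCode_injective (f : ℕ → ℕ) : Function.Injective (prefixCode f) := by
  intro m n h
  simpa using congrArg (fun y => (ofNat (List ℕ) y).length) h

theorem map_unpair_snd_eq {f : ℕ → ℕ} {D : List ℕ} (hD : ∀ y ∈ D, y ∈ graphSet f)
    (hfst : D.map (·.unpair.1) = List.range D.length) :
    D.map (·.unpair.2) = (List.range D.length).map f := by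
  rw [← hfst, List.map_map]
  exact List.map_congr_left fun y hy => (mem_graphSet.1 (hD y hy)).symm

theorem enumLE_prefixCodes_graphSet (f : ℕ → ℕ) :
    EnumLE (Set.range (prefixCode f)) (graphSet f) := by
  have hR : PrimrecRel fun (x : ℕ) (D : List ℕ) =>
      x = encode (D.map (·.unpair.2)) ∧ D.map (·.unpair.1) = List.range D.length :=
    (Primrec.eq.comp Primrec.fst (Primrec.encode.comp (Primrec.list_map Primrec.snd
      (Primrec.snd.comp (Primrec.unpair.comp Primrec.snd)).to₂))).and
    (Primrec.eq.comp (Primrec.list_map Primrec.snd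
      (Primrec.fst.comp (Primrec.unpair.comp Primrec.snd)).to₂)
      (Primrec.list_range.comp (Primrec.list_length.comp Primrec.snd)))
  obtain ⟨e, he⟩ := exists_enumOpApply_eq_s7 hR
  refine ⟨e, (he _).trans (Set.ext fun x => ⟨?_, ?_⟩)⟩
  · rintro ⟨D, ⟨rfl, hfst⟩, hD⟩
    exact ⟨D.length, by rw [map_unpair_snd_eq hD hfst, prefixCode]⟩
  · rintro ⟨n, rfl⟩
    refine ⟨(List.range n).map fun i => Nat.pair i (f i), ⟨?_, ?_⟩, ?_⟩
    · simp [prefixCode, List.map_map, Function.comp_def]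
    · simp [List.map_map, Function.comp_def]
    · simp only [List.mem_map]
      rintro _ ⟨i, -, rfl⟩
      exact ⟨i, rfl⟩

theorem enumLE_graphSet_prefixCodes (f : ℕ → ℕ) :
    EnumLE (graphSet f) (Set.range (prefixCode f)) := by
  have hR : PrimrecRel fun (x : ℕ) (D : List ℕ) =>
      ∃ y ∈ D, (ofNat (List ℕ) y)[x.unpair.1]? = some x.unpair.2 :=
    have hval : PrimrecRel fun (y x : ℕ) => (ofNat (List ℕ) y)[x.unpair.1]? = some x.unpair.2 :=
      Primrec.eq.comp
        (Primrec.list_getElem?.comp ((Primrec.ofNat _).comp Primrec.fst)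
          (Primrec.fst.comp (Primrec.unpair.comp Primrec.snd)))
        (Primrec.option_some.comp (Primrec.snd.comp (Primrec.unpair.comp Primrec.snd)))
    hval.exists_mem_list.comp Primrec.snd Primrec.fst
  obtain ⟨e, he⟩ := exists_enumOpApply_eq_s7 hR
  refine ⟨e, (he _).trans (Set.ext fun x => ⟨?_, ?_⟩)⟩
  · rintro ⟨D, ⟨y, hy, hx⟩, hD⟩
    obtain ⟨n, rfl⟩ := hD y hy
    rw [ofNat_prefixCode, List.getElem?_map, Option.map_eq_some_iff] at hx
    obtain ⟨i, hi, hfi⟩ := hx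
    obtain ⟨_, hxi⟩ := List.getElem?_eq_some_iff.1 hi
    rw [List.getElem_range] at hxi
    exact mem_graphSet.2 (hxi ▸ hfi)
  · rintro ⟨i, rfl⟩
    exact ⟨[prefixCode f (i + 1)], ⟨_, List.mem_singleton_self _, by simp⟩, by simp⟩

theorem exists_forall_mem_map_range {α : Type*} (g : ℕ → α) {s : Finset α}
    (hs : ↑s ⊆ Set.range g) : ∃ k, ∀ x ∈ s, x ∈ (List.range k).map g := by
  have hs' : ∀ x ∈ s, ∃ j, g j = x := fun x hx => hs hx
  choose! K hK using hs'
  exact ⟨s.sup K + 1, fun x hx =>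
    List.mem_map.2 ⟨K x, List.mem_range.2 (Nat.lt_succ_of_le (s.le_sup hx)), hK x hx⟩⟩

def pairLookup (σ : List ℕ) (i : ℕ) : Option ℕ :=
  (σ.find? fun y => y.unpair.1 = i).map (·.unpair.2)

theorem primrec_pairLookup : Primrec₂ pairLookup :=
  Primrec.option_map
    (PrimrecRel.listFind?
      (Primrec.eq.comp (Primrec.fst.comp (Primrec.unpair.comp Primrec.fst)) Primrec.snd))
    (Primrec.snd.comp (Primrec.unpair.comp Primrec.snd)).to₂

theorem pairLookup_of_prefix {σ τ : List ℕ} {i : ℕ} (h : σ <+: τ)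
    (hi : (pairLookup σ i).isSome) : pairLookup τ i = pairLookup σ i := by
  obtain ⟨v, hv⟩ := Option.isSome_iff_exists.1 hi
  obtain ⟨y, hy, rfl⟩ := Option.map_eq_some_iff.1 hv
  rw [hv, pairLookup, h.find?_eq_some hy, Option.map_some]

theorem pairLookup_eq_of_subset_graphSet {f : ℕ → ℕ} {σ : List ℕ}
    (hσ : ∀ y ∈ σ, y ∈ graphSet f) {i : ℕ} (hi : Nat.pair i (f i) ∈ σ) :
    pairLookup σ i = some (f i) := by
  obtain ⟨y, hy⟩ := Option.isSome_iff_exists.1 (List.find?_isSome.2 ⟨_, hi, by simp⟩ :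
    (σ.find? fun y => y.unpair.1 = i).isSome)
  have hyi : y.unpair.1 = i := by simpa using List.find?_some hy
  rw [pairLookup, hy, Option.map_some, ← mem_graphSet.1 (hσ y (List.mem_of_find?_eq_some hy)),
    hyi]

def decodePrefix (σ : List ℕ) (n : ℕ) : Option ℕ :=
  if ∀ i < n, (pairLookup σ i).isSome then
    some (encode ((List.range n).map fun i => (pairLookup σ i).getD 0))
  else none

theorem primrec_decodePrefix : Primrec₂ decodePrefix := by
  have hsome : PrimrecRel fun (i : ℕ) (σ : List ℕ) => (pairLookup σ i).isSome :=
    Primrec.eq.comp (Primrec.option_isSome.comp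
      (primrec_pairLookup.comp Primrec.snd Primrec.fst)) (Primrec.const true)
  have hcond : PrimrecRel fun (σ : List ℕ) (n : ℕ) => ∀ i < n, (pairLookup σ i).isSome :=
    (hsome.forall_mem_list.comp (Primrec.list_range.comp Primrec.snd) Primrec.fst).of_eq
      fun _ => by simp only [List.mem_range]
  exact Primrec.ite hcond
    (Primrec.option_some.comp (Primrec.encode.comp (Primrec.list_map
      (Primrec.list_range.comp Primrec.snd)
      (Primrec.option_getD.comp (primrec_pairLookup.comp (Primrec.fst.comp Primrec.fst)
        Primrec.snd) (Primrec.const 0)).to₂)))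
    (Primrec.const none)

theorem decodePrefix_of_prefix {σ τ : List ℕ} {n y : ℕ} (h : σ <+: τ)
    (hy : decodePrefix σ n = some y) : decodePrefix τ n = some y := by
  unfold decodePrefix at hy ⊢
  split_ifs at hy with hσ
  have hτ (i : ℕ) (hi : i < n) : pairLookup τ i = pairLookup σ i :=
    pairLookup_of_prefix h (hσ i hi)
  rw [if_pos fun i hi => hτ i hi ▸ hσ i hi, ← hy,
    List.map_congr_left fun i hi => by rw [hτ i (List.mem_range.1 hi)]]

theorem decodePrefix_eq_prefixCode {f : ℕ → ℕ} {σ : List ℕ} {n : ℕ}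
    (hσ : ∀ y ∈ σ, y ∈ graphSet f) (hn : ∀ i < n, Nat.pair i (f i) ∈ σ) :
    decodePrefix σ n = some (prefixCode f n) := by
  have hlook (i : ℕ) (hi : i < n) := pairLookup_eq_of_subset_graphSet hσ (hn i hi)
  rw [decodePrefix, if_pos fun i hi => by simp [hlook i hi], prefixCode,
    List.map_congr_left fun i hi => by rw [hlook i (List.mem_range.1 hi), Option.getD_some]]

theorem medvedevLE_CProb_EProb_graphSet (f : ℕ → ℕ) :
    MedvedevLE (CProb (Set.range (prefixCode f))) (EProb (graphSet f)) := by
  refine medvedevLE_of_option (fun p => decodePrefix p.1 p.2) primrec_decodePrefix.to_comp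
    decodePrefix_of_prefix fun g hg => ⟨prefixCode f, ⟨prefixCode_injective f, subset_rfl⟩,
      fun n => ?_⟩
  have hg : Set.range g = graphSet f := hg
  obtain ⟨k, hk⟩ := exists_forall_mem_map_range g
    (s := (Finset.range n).image fun i => Nat.pair i (f i))
    (by
      rw [hg, Finset.coe_image]
      rintro _ ⟨i, -, rfl⟩
      exact ⟨i, rfl⟩)
  refine ⟨k, decodePrefix_eq_prefixCode ?_ fun i hi => hk _ ?_⟩
  · intro y hy
    obtain ⟨j, -, rfl⟩ := List.mem_map.1 hy
    exact hg ▸ ⟨j, rfl⟩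
  · exact Finset.mem_image_of_mem _ (Finset.mem_range.2 hi)

def decodeGraph (σ : List ℕ) (m : ℕ) : Option ℕ :=
  (σ.find? fun y => m < (ofNat (List ℕ) y).length).map fun y =>
    Nat.pair m ((ofNat (List ℕ) y).getD m 0)

theorem primrec_decodeGraph : Primrec₂ decodeGraph :=
  Primrec.option_map
    (PrimrecRel.listFind? (R := fun y m => m < (ofNat (List ℕ) y).length)
      (Primrec.nat_lt.comp Primrec.snd
        (Primrec.list_length.comp ((Primrec.ofNat _).comp Primrec.fst))))
    (Primrec₂.natPair.comp (Primrec.snd.comp Primrec.fst)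
      ((Primrec.list_getD 0).comp ((Primrec.ofNat _).comp Primrec.snd)
        (Primrec.snd.comp Primrec.fst))).to₂

theorem decodeGraph_of_prefix {σ τ : List ℕ} {m y : ℕ} (h : σ <+: τ)
    (hy : decodeGraph σ m = some y) : decodeGraph τ m = some y := by
  obtain ⟨v, hv, rfl⟩ := Option.map_eq_some_iff.1 hy
  rw [decodeGraph, h.find?_eq_some hv, Option.map_some]

theorem decodeGraph_eq_pair {f : ℕ → ℕ} {σ : List ℕ} {m : ℕ}
    (hσ : ∀ y ∈ σ, y ∈ Set.range (prefixCode f))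
    (hm : ∃ y ∈ σ, m < (ofNat (List ℕ) y).length) :
    decodeGraph σ m = some (Nat.pair m (f m)) := by
  obtain ⟨y, hy⟩ := Option.isSome_iff_exists.1
    (List.find?_isSome.2 (by simpa using hm) :
      (σ.find? fun y => m < (ofNat (List ℕ) y).length).isSome)
  have hlt : m < (ofNat (List ℕ) y).length := by simpa using List.find?_some hy
  obtain ⟨n, rfl⟩ := hσ y (List.mem_of_find?_eq_some hy)
  rw [ofNat_prefixCode, List.length_map, List.length_range] at hlt
  simp [decodeGraph, hy, List.getD_eq_getElem?_getD, List.getElem?_range hlt]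

theorem exists_lt_length_ofNat {f g : ℕ → ℕ} (hg : Function.Injective g)
    (hgf : Set.range g ⊆ Set.range (prefixCode f)) (m : ℕ) :
    ∃ k, m < (ofNat (List ℕ) (g k)).length := by
  have hlen : Function.Injective fun k => (ofNat (List ℕ) (g k)).length := fun a b hab =>
    hg <| by
      rw [← prefixCode_length_ofNat (hgf ⟨a, rfl⟩), ← prefixCode_length_ofNat (hgf ⟨b, rfl⟩)]
      exact congrArg _ hab
  obtain ⟨_, ⟨k, rfl⟩, hk⟩ := (Set.infinite_range_of_injective hlen).exists_gt m
  exact ⟨k, hk⟩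

theorem medvedevLE_EProb_graphSet_CProb (f : ℕ → ℕ) :
    MedvedevLE (EProb (graphSet f)) (CProb (Set.range (prefixCode f))) := by
  refine medvedevLE_of_option (fun p => decodeGraph p.1 p.2) primrec_decodeGraph.to_comp
    decodeGraph_of_prefix fun g ⟨hinj, hgf⟩ => ⟨fun m => Nat.pair m (f m), rfl, fun m => ?_⟩
  obtain ⟨k, hk⟩ := exists_lt_length_ofNat hinj hgf m
  refine ⟨k + 1, decodeGraph_eq_pair (fun y hy => ?_)
    ⟨g k, List.mem_map_of_mem List.self_mem_range_succ, hk⟩⟩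
  obtain ⟨j, -, rfl⟩ := List.mem_map.1 hy
  exact hgf ⟨j, rfl⟩

/-- If `f` is total, then there is a set `B ≡ₑ graph(f)` with `C_B ≡ₛ E_{graph(f)}`. -/
theorem stmt7 (f : ℕ → ℕ) :
    ∃ B : Set ℕ, EnumEquiv B (graphSet f) ∧
      MedvedevEquiv (CProb B) (EProb (graphSet f)) :=
  ⟨Set.range (prefixCode f), ⟨enumLE_prefixCodes_graphSet f, enumLE_graphSet_prefixCodes f⟩,
    medvedevLE_CProb_EProb_graphSet f, medvedevLE_EProb_graphSet_CProb f⟩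
end
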